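/- arXiv:1712.06349 — 2 statements merged into one kernel-verified Lean document; each statement's English description precedes it below -/
import Mathlib

section
/- For every total Boolean function f, D(f) ≤ C_0(f) · C_1(f), where C_0 and C_1 denote the maximum certificate complexity over 0-inputs and 1-inputs respectively. In particular D(f) ≤ C(f)^2. -/
namespace QC

variable {ι : Type*} [Fintype ι] [DecidableEq ι]

/-- A total Boolean function on inputs indexed by `ι`. -/
abbrev BFun (ι : Type*) := (ι → Bool) → Bool

/-- Flip the bits of `x` in the set `S`. -/
def flip (x : ι → Bool) (S : Finset ι) : ι → Bool := fun i => if i ∈ S then !x i else x i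

/-- There exist `k` pairwise disjoint sensitive blocks for `f` at `x`. -/
def HasBS (f : BFun ι) (x : ι → Bool) (k : ℕ) : Prop :=
  ∃ S : Fin k → Finset ι, (∀ i j, i ≠ j → Disjoint (S i) (S j)) ∧ ∀ i, f (flip x (S i)) ≠ f x

/-- Block sensitivity of `f` at `x`. -/
noncomputable def bsAt (f : BFun ι) (x : ι → Bool) : ℕ := sSup {k | HasBS f x k}

/-- Block sensitivity of `f`. -/
noncomputable def bs (f : BFun ι) : ℕ := sSup {k | ∃ x, HasBS f x k}

/-- `S` is a certificate for `f` on input `x`. -/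
def IsCert (f : BFun ι) (x : ι → Bool) (S : Finset ι) : Prop :=
  ∀ y, (∀ i ∈ S, y i = x i) → f y = f x

/-- Certificate complexity of `f` at `x`. -/
noncomputable def CAt (f : BFun ι) (x : ι → Bool) : ℕ :=
  sInf {k | ∃ S : Finset ι, IsCert f x S ∧ S.card = k}

/-- Certificate complexity of `f`. -/
noncomputable def C (f : BFun ι) : ℕ := sSup (Set.range (CAt f))

/-- `b`-certificate complexity: max certificate complexity over inputs with value `b`. -/
noncomputable def Cb (f : BFun ι) (b : Bool) : ℕ := sSup {k | ∃ x, f x = b ∧ CAt f x = k}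

/-- Sensitivity of `f` at `x`. -/
def sensAt (f : BFun ι) (x : ι → Bool) : ℕ :=
  (Finset.univ.filter (fun i => f (flip x {i}) ≠ f x)).card

/-- Sensitivity of `f`. -/
noncomputable def sens (f : BFun ι) : ℕ := sSup (Set.range (sensAt f))

/-- Deterministic decision trees querying variables indexed by `ι`. -/
inductive DTree (ι : Type*) where
  | leaf (b : Bool)
  | node (i : ι) (t0 t1 : DTree ι)

/-- Evaluate a decision tree on input `x`. -/
def DTree.eval : DTree ι → (ι → Bool) → Bool
  | .leaf b, _ => b
  | .node i t0 t1, x => if x i then t1.eval x else t0.eval x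

/-- Depth (worst-case number of queries) of a decision tree. -/
def DTree.depth : DTree ι → ℕ
  | .leaf _ => 0
  | .node _ t0 t1 => max t0.depth t1.depth + 1

/-- The tree `T` computes `f`. -/
def Computes (T : DTree ι) (f : BFun ι) : Prop := ∀ x, T.eval x = f x

/-- Deterministic query (decision-tree) complexity. -/
noncomputable def D (f : BFun ι) : ℕ := sInf {d | ∃ T : DTree ι, Computes T f ∧ T.depth = d}

/-- A multilinear polynomial: degree at most 1 in each variable. -/
def Multilinear (p : MvPolynomial ι ℝ) : Prop := ∀ m ∈ p.support, ∀ i, m i ≤ 1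

/-- Embed Boolean inputs into the reals. -/
def b2r (x : ι → Bool) : ι → ℝ := fun i => if x i then 1 else 0

/-- `p` represents the Boolean function `f` on the Boolean cube. -/
def Represents (p : MvPolynomial ι ℝ) (f : BFun ι) : Prop :=
  ∀ x, MvPolynomial.eval (b2r x) p = if f x then 1 else 0

/-- Exact degree of `f`: least total degree of a multilinear representing polynomial. -/
noncomputable def degF (f : BFun ι) : ℕ :=
  sInf {d | ∃ p : MvPolynomial ι ℝ, Multilinear p ∧ Represents p f ∧ p.totalDegree = d}

end QC

/-!
Unless `f` is constant it has a `0`-input `z`; query the variables of a minimal certificate `S`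
of `z`, at most `C₀(f)` of them. Every `1`-certificate meets `S`, since an input agreeing with
both certificates would have both values. Hence each restriction of `f` obtained by fixing the
variables of `S` keeps `0`-certificates of size `C₀(f)` and has `1`-certificates of size
`C₁(f) - 1`, and induction on the `1`-certificate bound gives a tree of depth `C₀(f) · C₁(f)`.
-/

namespace QC

variable {ι : Type*}

def CertBound (f : BFun ι) (b : Bool) (k : ℕ) : Prop :=
  ∀ x, f x = b → ∃ S : Finset ι, IsCert f x S ∧ S.card ≤ k

def restrict [DecidableEq ι] (f : BFun ι) (S : Finset ι) (ρ : ι → Bool) : BFun ι :=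
  fun x => f (S.piecewise ρ x)

lemma restrict_empty [DecidableEq ι] (f : BFun ι) (ρ : ι → Bool) : restrict f ∅ ρ = f :=
  funext fun x => congrArg f (Finset.piecewise_empty ρ x)

lemma IsCert.eq_of_empty {f : BFun ι} {x : ι → Bool} (h : IsCert f x ∅) (y : ι → Bool) :
    f y = f x :=
  h y (by simp)

section Fintype

variable [Fintype ι]

lemma isCert_univ (f : BFun ι) (x : ι → Bool) : IsCert f x Finset.univ := fun y hy => by
  rw [funext fun i => hy i (Finset.mem_univ i)]

lemma exists_isCert_card_eq_CAt (f : BFun ι) (x : ι → Bool) :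
    ∃ S : Finset ι, IsCert f x S ∧ S.card = CAt f x :=
  Nat.sInf_mem (s := {k | ∃ S : Finset ι, IsCert f x S ∧ S.card = k})
    ⟨_, Finset.univ, isCert_univ f x, rfl⟩

lemma CAt_le_card (f : BFun ι) (x : ι → Bool) : CAt f x ≤ Fintype.card ι :=
  Nat.sInf_le ⟨Finset.univ, isCert_univ f x, Finset.card_univ⟩

lemma CAt_le_Cb (f : BFun ι) (x : ι → Bool) : CAt f x ≤ Cb f (f x) :=
  le_csSup ⟨Fintype.card ι, by rintro k ⟨y, -, rfl⟩; exact CAt_le_card f y⟩ ⟨x, rfl, rfl⟩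

lemma certBound_Cb (f : BFun ι) (b : Bool) : CertBound f b (Cb f b) := by
  rintro x rfl
  obtain ⟨S, hS, hcard⟩ := exists_isCert_card_eq_CAt f x
  exact ⟨S, hS, hcard ▸ CAt_le_Cb f x⟩

lemma Cb_le_C (f : BFun ι) (b : Bool) : Cb f b ≤ C f :=
  csSup_le' <| by
    rintro k ⟨x, -, rfl⟩
    exact le_csSup ⟨Fintype.card ι, by rintro k ⟨y, rfl⟩; exact CAt_le_card f y⟩ ⟨x, rfl⟩

end Fintype

lemma D_le_depth {f : BFun ι} {T : DTree ι} (hT : Computes T f) : D f ≤ T.depth :=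
  Nat.sInf_le ⟨T, hT, rfl⟩

variable [DecidableEq ι]

lemma IsCert.inter_nonempty {f : BFun ι} {x y : ι → Bool} {S T : Finset ι}
    (hS : IsCert f x S) (hT : IsCert f y T) (hxy : f x ≠ f y) : (S ∩ T).Nonempty := by
  by_contra hdisj
  rw [Finset.not_nonempty_iff_eq_empty, ← Finset.disjoint_iff_inter_eq_empty] at hdisj
  have hx : f (S.piecewise x y) = f x :=
    hS _ fun i hi => Finset.piecewise_eq_of_mem _ _ _ hi
  have hy : f (S.piecewise x y) = f y :=
    hT _ fun i hi => Finset.piecewise_eq_of_notMem _ _ _ (Finset.disjoint_right.1 hdisj hi)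
  exact hxy (hx.symm.trans hy)

lemma IsCert.restrict {f : BFun ι} {S T : Finset ι} {ρ x : ι → Bool}
    (hT : IsCert f (S.piecewise ρ x) T) : IsCert (QC.restrict f S ρ) x (T \ S) := by
  intro y hy
  refine hT _ fun i hi => ?_
  by_cases hiS : i ∈ S
  · simp [Finset.piecewise_eq_of_mem _ _ _ hiS]
  · simp [Finset.piecewise_eq_of_notMem _ _ _ hiS, hy i (Finset.mem_sdiff.2 ⟨hi, hiS⟩)]

lemma CertBound.restrict {f : BFun ι} {b : Bool} {k : ℕ} (h : CertBound f b k)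
    (S : Finset ι) (ρ : ι → Bool) : CertBound (QC.restrict f S ρ) b k := by
  intro x hx
  obtain ⟨T, hT, hcard⟩ := h _ hx
  exact ⟨T \ S, hT.restrict, (Finset.card_le_card Finset.sdiff_subset).trans hcard⟩

lemma CertBound.restrict_of_isCert {f : BFun ι} {b : Bool} {k : ℕ} (h : CertBound f b (k + 1))
    {z : ι → Bool} {S : Finset ι} (hz : f z = !b) (hS : IsCert f z S) (ρ : ι → Bool) :
    CertBound (QC.restrict f S ρ) b k := by
  intro x hx
  obtain ⟨T, hT, hcard⟩ := h _ hx
  have hfx : f (S.piecewise ρ x) = b := hx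
  have hmeet : (T ∩ S).Nonempty := hT.inter_nonempty hS (by simp [hz, hfx])
  have hsplit := Finset.card_sdiff_add_card_inter T S
  exact ⟨T \ S, hT.restrict, by have := hmeet.card_pos; omega⟩

lemma exists_computes_node {f : BFun ι} {d : ℕ} (i : ι)
    (h : ∀ b, ∃ T : DTree ι, Computes T (fun x => f (Function.update x i b)) ∧ T.depth ≤ d) :
    ∃ T : DTree ι, Computes T f ∧ T.depth ≤ d + 1 := by
  obtain ⟨T₀, hT₀, hd₀⟩ := h false
  obtain ⟨T₁, hT₁, hd₁⟩ := h true
  refine ⟨.node i T₀ T₁, fun x => ?_, by simp only [DTree.depth]; omega⟩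
  have hx : ∀ b, x i = b → f (Function.update x i b) = f x := by
    rintro b rfl
    rw [Function.update_eq_self]
  cases hxi : x i <;> simp [DTree.eval, hxi, hT₀ x, hT₁ x, hx _ hxi]

lemma exists_computes_of_restrict (S : Finset ι) {f : BFun ι} {d : ℕ}
    (h : ∀ ρ, ∃ T : DTree ι, Computes T (restrict f S ρ) ∧ T.depth ≤ d) :
    ∃ T : DTree ι, Computes T f ∧ T.depth ≤ S.card + d := by
  induction S using Finset.induction_on generalizing f with
  | empty => simpa only [restrict_empty, Finset.card_empty, zero_add] using h fun _ => false
  | insert i S hiS ih =>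
    rw [Finset.card_insert_of_notMem hiS, add_right_comm]
    refine exists_computes_node i fun b => ih fun ρ => ?_
    have hρ : ∀ x, S.piecewise (Function.update ρ i b) x = S.piecewise ρ x := fun x =>
      Finset.piecewise_congr _
        (fun j hj => Function.update_of_ne (ne_of_mem_of_not_mem hj hiS) _ _) (fun _ _ => rfl)
    have hres : restrict f (insert i S) (Function.update ρ i b)
        = restrict (fun x => f (Function.update x i b)) S ρ := by
      funext x
      simp only [QC.restrict, Finset.piecewise_insert, hρ, Function.update_self]
    exact hres ▸ h (Function.update ρ i b)

theorem exists_computes_depth_le_mul {f : BFun ι} {c₀ c₁ : ℕ}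
    (h₀ : CertBound f false c₀) (h₁ : CertBound f true c₁) :
    ∃ T : DTree ι, Computes T f ∧ T.depth ≤ c₀ * c₁ := by
  induction c₁ generalizing f with
  | zero =>
    by_cases htrue : ∃ x, f x = true
    · obtain ⟨x, hx⟩ := htrue
      obtain ⟨S, hS, hcard⟩ := h₁ x hx
      rw [Nat.le_zero, Finset.card_eq_zero] at hcard
      exact ⟨.leaf true, fun y => by simp [DTree.eval, (hcard ▸ hS).eq_of_empty y, hx], by
        simp [DTree.depth]⟩
    · exact ⟨.leaf false, fun y => by simp_all [DTree.eval], by simp [DTree.depth]⟩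
  | succ c₁ ih =>
    by_cases hfalse : ∃ z, f z = false
    · obtain ⟨z, hz⟩ := hfalse
      obtain ⟨S, hS, hcard⟩ := h₀ z hz
      obtain ⟨T, hT, hdepth⟩ := exists_computes_of_restrict S fun ρ =>
        ih (h₀.restrict S ρ) (h₁.restrict_of_isCert hz hS ρ)
      exact ⟨T, hT, hdepth.trans (by rw [Nat.mul_succ]; omega)⟩
    · exact ⟨.leaf true, fun y => by simp_all [DTree.eval], by simp [DTree.depth]⟩

end QC

/-- `D(f) ≤ C_0(f) · C_1(f)`, and in particular `D(f) ≤ C(f)^2`. -/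
theorem stmt4 {ι : Type*} [Fintype ι] [DecidableEq ι] (f : QC.BFun ι) :
    QC.D f ≤ QC.Cb f false * QC.Cb f true ∧ QC.D f ≤ QC.C f ^ 2 := by
  obtain ⟨T, hT, hdepth⟩ :=
    QC.exists_computes_depth_le_mul (QC.certBound_Cb f false) (QC.certBound_Cb f true)
  have hD : QC.D f ≤ QC.Cb f false * QC.Cb f true := (QC.D_le_depth hT).trans hdepth
  refine ⟨hD, hD.trans ?_⟩
  rw [sq]
  exact Nat.mul_le_mul (QC.Cb_le_C f false) (QC.Cb_le_C f true)
end

section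
/- For every total Boolean function f, the certificate complexity satisfies C(f) ≤ s(f) · bs(f) ≤ bs(f)^2, where s(f) is the (pointwise maximum) sensitivity of f. -/
namespace QC

section Flip

variable {ι : Type*} [DecidableEq ι]

@[simp]
lemma flip_empty (x : ι → Bool) : QC.flip x ∅ = x := by
  funext j
  simp [QC.flip]

lemma flip_singleton_flip {x : ι → Bool} {B : Finset ι} {i : ι} (hi : i ∈ B) :
    QC.flip (QC.flip x B) {i} = QC.flip x (B.erase i) := by
  funext j
  by_cases hji : j = i
  · subst hji
    simp [QC.flip, hi]
  · simp [QC.flip, hji]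

lemma flip_filter_ne [Fintype ι] (x y : ι → Bool) :
    QC.flip x (Finset.univ.filter fun i => y i ≠ x i) = y := by
  funext j
  cases hx : x j <;> cases hy : y j <;> simp [QC.flip, hx, hy]

end Flip

variable {ι : Type*} {f : BFun ι} {x : ι → Bool}

lemma CAt_le_card_s5 {S : Finset ι} (hS : IsCert f x S) : CAt f x ≤ S.card :=
  Nat.sInf_le ⟨S, hS, rfl⟩

variable [DecidableEq ι]

lemma hasBS_succ {k : ℕ} {S : Fin k → Finset ι}
    (hS : ∀ i j, i ≠ j → Disjoint (S i) (S j)) (hsens : ∀ i, f (QC.flip x (S i)) ≠ f x)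
    {D : Finset ι} (hD : ∀ i, Disjoint D (S i)) (hDsens : f (QC.flip x D) ≠ f x) :
    HasBS f x (k + 1) := by
  refine ⟨Fin.cons D S, fun i j hij => ?_, Fin.cases hDsens hsens⟩
  cases i using Fin.cases <;> cases j using Fin.cases
  · exact absurd rfl hij
  · exact hD _
  · exact (hD _).symm
  · exact hS _ _ fun h => hij (congrArg Fin.succ h)

variable [Fintype ι]

lemma HasBS.le_card {k : ℕ} (h : HasBS f x k) : k ≤ Fintype.card ι := by
  obtain ⟨S, hS, hsens⟩ := h
  have hne (i : Fin k) : (S i).Nonempty :=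
    Finset.nonempty_iff_ne_empty.2 fun h => hsens i (by rw [h, flip_empty])
  choose p hp using hne
  have hp_inj : Function.Injective p := fun i j hij =>
    by_contra fun hne => Finset.disjoint_left.1 (hS i j hne) (hp i) (hij ▸ hp j)
  simpa using Fintype.card_le_of_injective p hp_inj

lemma bddAbove_hasBS (f : BFun ι) (x : ι → Bool) : BddAbove {k | HasBS f x k} :=
  ⟨Fintype.card ι, fun _ => HasBS.le_card⟩

lemma HasBS.le_bsAt {k : ℕ} (h : HasBS f x k) : k ≤ bsAt f x :=
  le_csSup (bddAbove_hasBS f x) h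

lemma bddAbove_exists_hasBS (f : BFun ι) : BddAbove {k | ∃ x, HasBS f x k} :=
  ⟨Fintype.card ι, fun _ hk => hk.elim fun _ => HasBS.le_card⟩

lemma HasBS.le_bs {k : ℕ} (h : HasBS f x k) : k ≤ bs f :=
  le_csSup (bddAbove_exists_hasBS f) ⟨x, h⟩

lemma hasBS_bsAt (f : BFun ι) (x : ι → Bool) : HasBS f x (bsAt f x) :=
  Nat.sSup_mem (s := {k | HasBS f x k}) ⟨0, Fin.elim0, fun i => i.elim0, fun i => i.elim0⟩
    (bddAbove_hasBS f x)

lemma hasBS_sensAt (f : BFun ι) (x : ι → Bool) : HasBS f x (sensAt f x) := by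
  set T := Finset.univ.filter fun i => f (QC.flip x {i}) ≠ f x
  refine ⟨fun i => {(T.equivFin.symm i : ι)}, fun i j hij => ?_, fun i => ?_⟩
  · exact Finset.disjoint_singleton.2 fun h => hij (T.equivFin.symm.injective (Subtype.ext h))
  · exact (Finset.mem_filter.1 (T.equivFin.symm i).2).2

lemma sensAt_le_sens (f : BFun ι) (x : ι → Bool) : sensAt f x ≤ sens f :=
  le_csSup ⟨Fintype.card ι, Set.forall_mem_range.2 fun _ => Finset.card_le_univ _⟩ ⟨x, rfl⟩

theorem sens_le_bs (f : BFun ι) : sens f ≤ bs f :=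
  csSup_le (Set.range_nonempty _) (Set.forall_mem_range.2 fun x => (hasBS_sensAt f x).le_bs)

lemma card_le_sens_of_minimal {B : Finset ι} (hB : Minimal (fun B => f (QC.flip x B) ≠ f x) B) :
    B.card ≤ sens f := by
  have hsub : B ⊆ Finset.univ.filter
      fun i => f (QC.flip (QC.flip x B) {i}) ≠ f (QC.flip x B) := fun i hi => by
    have hrest : f (QC.flip x (B.erase i)) = f x :=
      not_not.1 (hB.not_prop_of_lt (Finset.erase_ssubset hi))
    simpa [flip_singleton_flip hi, hrest] using Ne.symm hB.prop
  exact (Finset.card_le_card hsub).trans (sensAt_le_sens f _)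

lemma isCert_biUnion_of_bsAt {S : Fin (bsAt f x) → Finset ι}
    (hS : ∀ i j, i ≠ j → Disjoint (S i) (S j)) (hsens : ∀ i, f (QC.flip x (S i)) ≠ f x) :
    IsCert f x (Finset.univ.biUnion S) := by
  intro y hy
  by_contra hne
  have hD (i : Fin (bsAt f x)) : Disjoint (Finset.univ.filter fun j => y j ≠ x j) (S i) :=
    Finset.disjoint_left.2 fun j hj hjS =>
      (Finset.mem_filter.1 hj).2 (hy j (Finset.mem_biUnion.2 ⟨i, Finset.mem_univ _, hjS⟩))
  have := (hasBS_succ hS hsens hD (by rwa [flip_filter_ne])).le_bsAt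
  omega

theorem CAt_le_sens_mul_bs (f : BFun ι) (x : ι → Bool) : CAt f x ≤ sens f * bs f := by
  obtain ⟨S, hS, hsens⟩ := hasBS_bsAt f x
  choose M hMS hM using fun i =>
    exists_minimal_le_of_wellFoundedLT (fun B => f (QC.flip x B) ≠ f x) (S i) (hsens i)
  have hMdisj (i j) (hij : i ≠ j) : Disjoint (M i) (M j) := (hS i j hij).mono (hMS i) (hMS j)
  calc CAt f x ≤ (Finset.univ.biUnion M).card :=
        CAt_le_card_s5 (isCert_biUnion_of_bsAt hMdisj fun i => (hM i).prop)
    _ = ∑ i, (M i).card := Finset.card_biUnion fun i _ j _ hij => hMdisj i j hij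
    _ ≤ ∑ _i : Fin (bsAt f x), sens f :=
        Finset.sum_le_sum fun i _ => card_le_sens_of_minimal (hM i)
    _ = sens f * bsAt f x := by simp [mul_comm]
    _ ≤ sens f * bs f := Nat.mul_le_mul_left _ (hasBS_bsAt f x).le_bs

end QC

/-- `C(f) ≤ s(f) · bs(f) ≤ bs(f)^2`. -/
theorem stmt5 {ι : Type*} [Fintype ι] [DecidableEq ι] (f : QC.BFun ι) :
    QC.C f ≤ QC.sens f * QC.bs f ∧ QC.sens f * QC.bs f ≤ QC.bs f ^ 2 :=
  ⟨csSup_le (Set.range_nonempty _) (Set.forall_mem_range.2 (QC.CAt_le_sens_mul_bs f)),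
    sq (QC.bs f) ▸ Nat.mul_le_mul_right _ (QC.sens_le_bs f)⟩
end
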